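/- Let A₀ > 0 and 0 < δ < 1/4 be real numbers. Let H : ℝ → ℝ be differentiable on (−δ,δ) with H(0) = 0, and let φ, ξ : ℝ → ℝ be continuous on (−δ,δ) with φ(t) > A₀/4 and 0 < ξ(t) < 4·A₀ for all t ∈ (−δ,δ). Define A(t) := A₀ + ∫₀ᵗ H(s)·ξ(s) ds. If H'(t)·φ(t) ≤ ∫₀ᵗ H(s)·ξ(s) ds for all t ∈ (−δ,δ), then H(t) ≤ 0 for all t ∈ [0,δ), H(t) ≥ 0 for all t ∈ (−δ,0], and consequently A(t) ≤ A₀ for all t ∈ (−δ,δ). -/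

import Mathlib

/-!
Suppose `a ≤ φ` and `0 ≤ ξ ≤ K` on `[0, b]`, and let `M ≥ 0` be the maximum of `H` there, attained
at `c`. Then `∫₀ᵗ H ξ ≤ b M K` on `[0, b]`, so the inequality `H' φ ≤ ∫₀ᵗ H ξ` gives
`H' ≤ b M K / a`, and the mean value theorem gives `M = H c - H 0 ≤ b² M K / a`. Since `b² K < a`
(here `a = A₀/4`, `K = 4 A₀` and `b < 1/4`), `M ≤ 0`. Applying this to `t ↦ -H (-t)` handles
`t ≤ 0`; then `H ξ` has the sign that makes `A t - A₀ = ∫₀ᵗ H ξ` nonpositive.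
-/

open Set intervalIntegral

section IntegroDifferential

variable {H H' φ ξ : ℝ → ℝ} {a K : ℝ}

theorem nonpos_of_deriv_mul_le_integral {b : ℝ} (ha : 0 < a) (hb : 0 ≤ b) (hbK : b ^ 2 * K < a)
    (hH : ∀ t ∈ Icc 0 b, HasDerivAt H (H' t) t) (hH0 : H 0 = 0)
    (hξ : ContinuousOn ξ (Icc 0 b)) (hφ : ∀ t ∈ Icc 0 b, a ≤ φ t)
    (hξ0 : ∀ t ∈ Icc 0 b, 0 ≤ ξ t) (hξK : ∀ t ∈ Icc 0 b, ξ t ≤ K)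
    (hineq : ∀ t ∈ Icc 0 b, H' t * φ t ≤ ∫ s in 0..t, H s * ξ s) :
    H b ≤ 0 := by
  have h0 : (0 : ℝ) ∈ Icc 0 b := left_mem_Icc.2 hb
  have hHc : ContinuousOn H (Icc 0 b) := fun t ht => (hH t ht).continuousAt.continuousWithinAt
  obtain ⟨c, hc, hcmax⟩ := isCompact_Icc.exists_isMaxOn (nonempty_Icc.2 hb) hHc
  have hM : 0 ≤ H c := hH0 ▸ hcmax h0
  have hK : 0 ≤ K := (hξ0 0 h0).trans (hξK 0 h0)
  have hint : ∀ t ∈ Icc 0 b, ∫ s in 0..t, H s * ξ s ≤ b * (H c * K) := by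
    intro t ht
    have hsub : Icc 0 t ⊆ Icc 0 b := Icc_subset_Icc_right ht.2
    calc ∫ s in 0..t, H s * ξ s ≤ ∫ _ in 0..t, H c * K :=
          integral_mono_on ht.1 (((hHc.mul hξ).mono hsub).intervalIntegrable_of_Icc ht.1)
            intervalIntegrable_const fun s hs =>
              mul_le_mul (hcmax (hsub hs)) (hξK s (hsub hs)) (hξ0 s (hsub hs)) hM
      _ = t * (H c * K) := by simp only [integral_const, sub_zero, smul_eq_mul]
      _ ≤ b * (H c * K) := mul_le_mul_of_nonneg_right ht.2 (mul_nonneg hM hK)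
  have hderiv : ∀ t ∈ Icc 0 b, H' t ≤ b * (H c * K) / a := by
    intro t ht
    rw [le_div_iff₀ ha]
    rcases le_or_gt (H' t) 0 with h | h
    · exact (mul_nonpos_of_nonpos_of_nonneg h ha.le).trans (mul_nonneg hb (mul_nonneg hM hK))
    · calc H' t * a ≤ H' t * φ t := mul_le_mul_of_nonneg_left (hφ t ht) h.le
        _ ≤ b * (H c * K) := (hineq t ht).trans (hint t ht)
  have hmvt : H c - H 0 ≤ b * (H c * K) / a * (c - 0) :=
    (convex_Icc 0 b).image_sub_le_mul_sub_of_deriv_le hHc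
      (fun t ht => (hH t (interior_subset ht)).differentiableAt.differentiableWithinAt)
      (fun t ht => (hH t (interior_subset ht)).deriv ▸ hderiv t (interior_subset ht))
      0 h0 c hc hc.1
  rw [hH0, sub_zero, sub_zero, div_mul_eq_mul_div, le_div_iff₀ ha] at hmvt
  have hMc : H c ≤ 0 := by
    nlinarith [mul_le_mul_of_nonneg_left hc.2 (mul_nonneg hb (mul_nonneg hM hK))]
  exact (hcmax (right_mem_Icc.2 hb)).trans hMc

theorem nonpos_on_Ico_of_deriv_mul_le_integral {δ : ℝ} (ha : 0 < a) (hδK : δ ^ 2 * K < a)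
    (hH : ∀ t ∈ Ioo (-δ) δ, HasDerivAt H (H' t) t) (hH0 : H 0 = 0)
    (hξ : ContinuousOn ξ (Ioo (-δ) δ)) (hφ : ∀ t ∈ Ioo (-δ) δ, a ≤ φ t)
    (hξ0 : ∀ t ∈ Ioo (-δ) δ, 0 ≤ ξ t) (hξK : ∀ t ∈ Ioo (-δ) δ, ξ t ≤ K)
    (hineq : ∀ t ∈ Ioo (-δ) δ, H' t * φ t ≤ ∫ s in 0..t, H s * ξ s) :
    ∀ t ∈ Ico 0 δ, H t ≤ 0 := by
  rintro b ⟨hb, hbδ⟩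
  have hsub : Icc 0 b ⊆ Ioo (-δ) δ := fun t ht => ⟨by linarith [ht.1], ht.2.trans_lt hbδ⟩
  have hK : 0 ≤ K := (hξ0 0 (hsub (left_mem_Icc.2 hb))).trans (hξK 0 (hsub (left_mem_Icc.2 hb)))
  have hbK : b ^ 2 * K < a :=
    (mul_le_mul_of_nonneg_right (pow_le_pow_left₀ hb hbδ.le 2) hK).trans_lt hδK
  exact nonpos_of_deriv_mul_le_integral ha hb hbK (fun t ht => hH t (hsub ht)) hH0 (hξ.mono hsub)
    (fun t ht => hφ t (hsub ht)) (fun t ht => hξ0 t (hsub ht)) (fun t ht => hξK t (hsub ht))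
    (fun t ht => hineq t (hsub ht))

theorem integral_neg_comp_neg (f : ℝ → ℝ) (t : ℝ) :
    ∫ s in 0..t, -f (-s) = ∫ s in 0..-t, f s := by
  rw [intervalIntegral.integral_neg, integral_comp_neg, neg_zero, integral_symm, neg_neg]

theorem nonneg_on_Ioc_of_deriv_mul_le_integral {δ : ℝ} (ha : 0 < a) (hδK : δ ^ 2 * K < a)
    (hH : ∀ t ∈ Ioo (-δ) δ, HasDerivAt H (H' t) t) (hH0 : H 0 = 0)
    (hξ : ContinuousOn ξ (Ioo (-δ) δ)) (hφ : ∀ t ∈ Ioo (-δ) δ, a ≤ φ t)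
    (hξ0 : ∀ t ∈ Ioo (-δ) δ, 0 ≤ ξ t) (hξK : ∀ t ∈ Ioo (-δ) δ, ξ t ≤ K)
    (hineq : ∀ t ∈ Ioo (-δ) δ, H' t * φ t ≤ ∫ s in 0..t, H s * ξ s) :
    ∀ t ∈ Ioc (-δ) 0, 0 ≤ H t := by
  have hneg : ∀ t ∈ Ioo (-δ) δ, -t ∈ Ioo (-δ) δ := fun t ht =>
    ⟨neg_lt_neg ht.2, by linarith [ht.1]⟩
  have hrefl := nonpos_on_Ico_of_deriv_mul_le_integral (H := fun t => -H (-t))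
    (H' := fun t => H' (-t)) (φ := fun t => φ (-t)) (ξ := fun t => ξ (-t)) ha hδK
    (fun t ht => by
      have h := ((hH (-t) (hneg t ht)).comp t (hasDerivAt_neg t)).neg
      rwa [mul_neg, mul_one, neg_neg] at h)
    (by simp [hH0]) (hξ.comp continuousOn_neg hneg) (fun t ht => hφ (-t) (hneg t ht))
    (fun t ht => hξ0 (-t) (hneg t ht)) (fun t ht => hξK (-t) (hneg t ht))
    (fun t ht => by
      simpa only [neg_mul, integral_neg_comp_neg fun s => H s * ξ s] using hineq (-t) (hneg t ht))
  rintro t ⟨htδ, ht⟩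
  simpa using hrefl (-t) ⟨neg_nonneg.2 ht, neg_lt.1 htδ⟩

end IntegroDifferential

theorem integral_from_zero_nonpos {f : ℝ → ℝ} {t : ℝ} (hpos : ∀ s ∈ Icc 0 t, f s ≤ 0)
    (hneg : ∀ s ∈ Icc t 0, 0 ≤ f s) : ∫ s in 0..t, f s ≤ 0 := by
  rcases le_total 0 t with ht | ht
  · simpa only [intervalIntegral.integral_neg, neg_nonneg] using
      integral_nonneg ht fun s hs => neg_nonneg.2 (hpos s hs)
  · rw [integral_symm, neg_nonpos]
    exact integral_nonneg ht hneg

theorem stmt_7_general (A₀ δ : ℝ) (hA₀ : 0 < A₀) (hδ0 : 0 < δ) (hδ : δ < 1/4)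
    (H H' φ ξ : ℝ → ℝ)
    (hHdiff : ∀ t ∈ Set.Ioo (-δ) δ, HasDerivAt H (H' t) t)
    (hH0 : H 0 = 0)
    (hξcont : ContinuousOn ξ (Set.Ioo (-δ) δ))
    (hφ : ∀ t ∈ Set.Ioo (-δ) δ, A₀ / 4 < φ t)
    (hξpos : ∀ t ∈ Set.Ioo (-δ) δ, 0 < ξ t)
    (hξlt : ∀ t ∈ Set.Ioo (-δ) δ, ξ t < 4 * A₀)
    (A : ℝ → ℝ) (hA : ∀ t, A t = A₀ + ∫ s in (0:ℝ)..t, H s * ξ s)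
    (hineq : ∀ t ∈ Set.Ioo (-δ) δ,
      H' t * φ t ≤ ∫ s in (0:ℝ)..t, H s * ξ s) :
    (∀ t ∈ Set.Ico (0:ℝ) δ, H t ≤ 0) ∧
    (∀ t ∈ Set.Ioc (-δ) (0:ℝ), 0 ≤ H t) ∧
    (∀ t ∈ Set.Ioo (-δ) δ, A t ≤ A₀) := by
  have ha : 0 < A₀ / 4 := by positivity
  have hδK : δ ^ 2 * (4 * A₀) < A₀ / 4 := by nlinarith [mul_pos hδ0 hA₀]
  have hφ' : ∀ t ∈ Ioo (-δ) δ, A₀ / 4 ≤ φ t := fun t ht => (hφ t ht).le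
  have hξ0 : ∀ t ∈ Ioo (-δ) δ, 0 ≤ ξ t := fun t ht => (hξpos t ht).le
  have hξK : ∀ t ∈ Ioo (-δ) δ, ξ t ≤ 4 * A₀ := fun t ht => (hξlt t ht).le
  have hright :=
    nonpos_on_Ico_of_deriv_mul_le_integral ha hδK hHdiff hH0 hξcont hφ' hξ0 hξK hineq
  have hleft :=
    nonneg_on_Ioc_of_deriv_mul_le_integral ha hδK hHdiff hH0 hξcont hφ' hξ0 hξK hineq
  refine ⟨hright, hleft, fun t ht => ?_⟩
  rw [hA t, add_le_iff_nonpos_right]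
  refine integral_from_zero_nonpos (fun s hs => ?_) fun s hs => ?_
  · have hs' : s ∈ Ioo (-δ) δ := ⟨by linarith [hs.1], hs.2.trans_lt ht.2⟩
    exact mul_nonpos_of_nonpos_of_nonneg (hright s ⟨hs.1, hs'.2⟩) (hξ0 s hs')
  · have hs' : s ∈ Ioo (-δ) δ := ⟨ht.1.trans_le hs.1, by linarith [hs.2]⟩
    exact mul_nonneg (hleft s ⟨hs'.1, hs.2⟩) (hξ0 s hs')

/-- The full two-sided analytic content of Theorem 2 in the case `R₀ < 0`:
the integro-differential inequality `H'(t)·φ(t) ≤ ∫₀ᵗ H(s)·ξ(s) ds` on `(−δ,δ)`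
forces `H ≤ 0` on `[0,δ)`, `H ≥ 0` on `(−δ,0]`, and hence the area
`A(t) = A₀ + ∫₀ᵗ H(s)·ξ(s) ds` satisfies `A(t) ≤ A₀` on `(−δ,δ)`. -/
theorem stmt_7 (A₀ δ : ℝ) (hA₀ : 0 < A₀) (hδ0 : 0 < δ) (hδ : δ < 1/4)
    (H H' φ ξ : ℝ → ℝ)
    (hHdiff : ∀ t ∈ Set.Ioo (-δ) δ, HasDerivAt H (H' t) t)
    (hH0 : H 0 = 0)
    (hφcont : ContinuousOn φ (Set.Ioo (-δ) δ))
    (hξcont : ContinuousOn ξ (Set.Ioo (-δ) δ))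
    (hφ : ∀ t ∈ Set.Ioo (-δ) δ, A₀ / 4 < φ t)
    (hξpos : ∀ t ∈ Set.Ioo (-δ) δ, 0 < ξ t)
    (hξlt : ∀ t ∈ Set.Ioo (-δ) δ, ξ t < 4 * A₀)
    (A : ℝ → ℝ) (hA : ∀ t, A t = A₀ + ∫ s in (0:ℝ)..t, H s * ξ s)
    (hineq : ∀ t ∈ Set.Ioo (-δ) δ,
      H' t * φ t ≤ ∫ s in (0:ℝ)..t, H s * ξ s) :
    (∀ t ∈ Set.Ico (0:ℝ) δ, H t ≤ 0) ∧
    (∀ t ∈ Set.Ioc (-δ) (0:ℝ), 0 ≤ H t) ∧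
    (∀ t ∈ Set.Ioo (-δ) δ, A t ≤ A₀) :=
  stmt_7_general A₀ δ hA₀ hδ0 hδ H H' φ ξ hHdiff hH0 hξcont hφ hξpos hξlt A hA hineq
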